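/- Let 𝔉 = 𝔉(X) be the free profinite group on a finite set X, i.e., the profinite completion of the free group F(X), with F(X) identified with its image in 𝔉. Then for any x ∈ X, the centralizer C_𝔉(x) of x in 𝔉 coincides with the closure in 𝔉 of the cyclic subgroup ⟨x⟩. -/

import Mathlib

set_option linter.unusedVariables false

namespace CSP

/-! ### The profinite completion of a discrete group -/

/-- The index set for the profinite completion: finite-index normal subgroups. -/
abbrev FinQuot (G : Type*) [Group G] : Type _ :=
  {N : Subgroup G // N.Normal ∧ N.FiniteIndex}

variable (G : Type*) [Group G]

instance (N : FinQuot G) : (N.1).Normal := N.2.1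

instance (N : FinQuot G) : TopologicalSpace (G ⧸ N.1) := ⊥

instance (N : FinQuot G) : DiscreteTopology (G ⧸ N.1) := ⟨rfl⟩

instance (N : FinQuot G) : IsTopologicalGroup (G ⧸ N.1) where
  continuous_mul := continuous_of_discreteTopology
  continuous_inv := continuous_of_discreteTopology

/-- The diagonal homomorphism from `G` into the product of all of its finite quotients. -/
def toFinQuots : G →* (∀ N : FinQuot G, G ⧸ N.1) :=
  Pi.monoidHom fun N => QuotientGroup.mk' N.1

/-- The profinite completion of `G` as a subgroup of the product of the finite
quotients of `G`: the closure of the image of the diagonal map. -/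
def profSubgroup : Subgroup (∀ N : FinQuot G, G ⧸ N.1) :=
  (toFinQuots G).range.topologicalClosure

/-- The profinite completion of a (discrete) group `G`, as a topological group.
For `G = F(X)` a free group on a finite set `X`, this is the free profinite group
`𝔉(X)` on `X`. -/
abbrev ProfComp : Type _ := ↥(profSubgroup G)

/-- The canonical homomorphism from `G` to its profinite completion.  For a free
group this is the embedding of `F(X)` into the free profinite group `𝔉(X)`. -/
def unit : G →* ProfComp G :=
  (toFinQuots G).codRestrict _ fun g =>
    Subgroup.le_topologicalClosure _ (MonoidHom.mem_range.2 ⟨g, rfl⟩)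

/-!
A centralizing element `w` of the completion is pinned down by its coordinates, so it lies in the
closure of `⟨x⟩` as soon as each coordinate `w_N ∈ F ⧸ N` is a power of `x̄`. Such a coordinate
is the image of `w_M` for any finer `M`, and `w_M` commutes with `x̄`; so it suffices to find, for
each `N`, a finite quotient `F ⧸ M` refining `F ⧸ N` in which commuting with `x̄` already forces
membership in `⟨x̄⟩` modulo `N`. Take `M` to be the kernel of `F → C₂ ≀ (F ⧸ N)` sending `x` to
`(δ₁, x̄)` and every other generator `y` to `(1, ȳ)`. If `(f, h)` commutes with `(δ₁, x̄)`, then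
`f · δ_h = δ₁ · (x̄ • f)`; multiplying over the orbit `⟨x̄⟩` cancels the `f`-terms, so `δ_h` has
the same nontrivial mass on `⟨x̄⟩` as `δ₁`, i.e. `h ∈ ⟨x̄⟩`.
-/

end CSP

namespace RegularWreathProduct

variable {D Q : Type*} [CommGroup D] [Group Q] [DecidableEq Q] [Finite Q]

theorem right_mem_zpowers_of_commute {d : D} (hd : d ≠ 1) {g : Q} {a : D ≀ᵣ Q}
    (ha : Commute a ⟨Pi.mulSingle 1 d, g⟩) : a.right ∈ Subgroup.zpowers g := by
  classical
  have : Fintype Q := Fintype.ofFinite Q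
  set S := (Subgroup.zpowers g : Set Q).toFinset
  have hleft : ∀ q, a.left q * (Pi.mulSingle a.right d : Q → D) q
      = (Pi.mulSingle 1 d : Q → D) q * a.left (g⁻¹ * q) := by
    intro q
    have hq := congrFun (congrArg left ha) q
    have hsingle : (Pi.mulSingle 1 d : Q → D) (a.right⁻¹ * q)
        = (Pi.mulSingle a.right d : Q → D) q := by
      simp only [Pi.mulSingle_apply, inv_mul_eq_one, eq_comm]
    simpa [hsingle] using hq
  have hshift : ∏ q ∈ S, a.left (g⁻¹ * q) = ∏ q ∈ S, a.left q :=
    Finset.prod_nbij' (g⁻¹ * ·) (g * ·) (by simp [S, Subgroup.mul_mem_cancel_left])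
      (by simp [S, Subgroup.mul_mem_cancel_left]) (by simp) (by simp) (fun _ _ => rfl)
  have hprod := Finset.prod_congr rfl fun q (_ : q ∈ S) => hleft q
  rw [Finset.prod_mul_distrib, Finset.prod_mul_distrib, hshift, Finset.prod_pi_mulSingle',
    Finset.prod_pi_mulSingle'] at hprod
  by_contra h
  simp only [S, Set.mem_toFinset, SetLike.mem_coe, h, one_mem, ↓reduceIte, mul_one,
    right_eq_mul] at hprod
  exact hd hprod

end RegularWreathProduct

namespace CSP

section Completion

variable {G : Type*} [Group G]

def proj (N : FinQuot G) : ProfComp G →* G ⧸ N.1 :=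
  (Pi.evalMonoidHom (fun N : FinQuot G => G ⧸ N.1) N).comp (profSubgroup G).subtype

@[simp]
lemma proj_unit (N : FinQuot G) (g : G) : proj N (unit G g) = g := rfl

lemma proj_eq_of_le (w : ProfComp G) {A B : FinQuot G} (hAB : A.1 ≤ B.1) {c : G}
    (hc : proj A w = c) : proj B w = c := by
  have hclosed : IsClosed {p : ∀ N : FinQuot G, G ⧸ N.1 | p A = c → p B = c} :=
    isClosed_imp
      ((continuous_apply (A := fun N : FinQuot G => G ⧸ N.1) A).isOpen_preimage _
        (isOpen_discrete {(c : G ⧸ A.1)}))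
      ((isClosed_discrete {(c : G ⧸ B.1)}).preimage
        (continuous_apply (A := fun N : FinQuot G => G ⧸ N.1) B))
  have hrange : ((toFinQuots G).range : Set (∀ N : FinQuot G, G ⧸ N.1))
      ⊆ {p | p A = c → p B = c} := by
    rintro _ ⟨g, rfl⟩ hg
    exact QuotientGroup.eq.mpr (hAB (QuotientGroup.eq.mp hg))
  have hw : w.1 ∈ closure ((toFinQuots G).range : Set (∀ N : FinQuot G, G ⧸ N.1)) := by
    rw [← Subgroup.topologicalClosure_coe]
    exact w.2
  exact closure_minimal hrange hclosed hw hc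

lemma exists_finQuot_le (I : Finset (FinQuot G)) : ∃ K : FinQuot G, ∀ i ∈ I, K.1 ≤ i.1 := by
  classical
  induction I using Finset.induction_on with
  | empty => exact ⟨⟨⊤, inferInstance, inferInstance⟩, by simp⟩
  | insert i I _ ih =>
    obtain ⟨K, hK⟩ := ih
    have := K.2.1
    have := K.2.2
    have := i.2.2
    refine ⟨⟨K.1 ⊓ i.1, inferInstance, inferInstance⟩, ?_⟩
    simp only [Finset.mem_insert, forall_eq_or_imp]
    exact ⟨inf_le_right, fun j hj => inf_le_left.trans (hK j hj)⟩

lemma mem_topologicalClosure_map_unit {H : Subgroup G} {w : ProfComp G}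
    (hw : ∀ N : FinQuot G, ∃ h ∈ H, proj N w = h) :
    w ∈ (H.map (unit G)).topologicalClosure := by
  rw [← SetLike.mem_coe, Subgroup.topologicalClosure_coe, closure_subtype, mem_closure_iff]
  intro o ho hwo
  obtain ⟨I, u, hu, hsub⟩ := isOpen_pi_iff.mp ho _ hwo
  obtain ⟨K, hK⟩ := exists_finQuot_le I
  obtain ⟨h, hH, hwh⟩ := hw K
  refine ⟨(unit G h).1, hsub fun i hi => ?_, ⟨unit G h, ⟨h, hH, rfl⟩, rfl⟩⟩
  change (h : G ⧸ i.1) ∈ u i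
  rw [← proj_eq_of_le w (hK i hi) hwh]
  exact (hu i hi).2

theorem centralizer_unit_eq_topologicalClosure_zpowers {g : G}
    (hg : ∀ N : FinQuot G, ∃ M : FinQuot G, M.1 ≤ N.1 ∧ ∀ c : G,
      Commute (c : G ⧸ M.1) g → (c : G ⧸ N.1) ∈ Subgroup.zpowers (g : G ⧸ N.1)) :
    Subgroup.centralizer {unit G g} = (Subgroup.zpowers (unit G g)).topologicalClosure := by
  refine le_antisymm (fun w hw => ?_)
    (Subgroup.topologicalClosure_minimal _ ?_ (Set.isClosed_centralizer _))
  · rw [← MonoidHom.map_zpowers]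
    refine mem_topologicalClosure_map_unit fun N => ?_
    obtain ⟨M, hMN, hM⟩ := hg N
    obtain ⟨c, hc⟩ := QuotientGroup.mk_surjective (proj M w)
    have hcomm : Commute (c : G ⧸ M.1) g := by
      have hw' : Commute w (unit G g) := Subgroup.mem_centralizer_singleton_iff.mp hw
      simpa [hc] using hw'.map (proj M)
    obtain ⟨j, hj⟩ := Subgroup.mem_zpowers_iff.mp (hM c hcomm)
    exact ⟨g ^ j, zpow_mem (Subgroup.mem_zpowers g) j, by
      rw [proj_eq_of_le w hMN hc.symm, ← hj, QuotientGroup.mk_zpow]⟩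
  · exact Subgroup.zpowers_le.mpr (Subgroup.mem_centralizer_singleton_iff.mpr rfl)

end Completion

section FreeGroup

open _root_.RegularWreathProduct

theorem FreeGroup.exists_finQuot_commute_imp_mem_zpowers {X : Type*} (x : X)
    (N : FinQuot (FreeGroup X)) :
    ∃ M : FinQuot (FreeGroup X), M.1 ≤ N.1 ∧ ∀ c : FreeGroup X,
      Commute (c : FreeGroup X ⧸ M.1) (FreeGroup.of x) →
        (c : FreeGroup X ⧸ N.1) ∈ Subgroup.zpowers (FreeGroup.of x : FreeGroup X ⧸ N.1) := by
  classical
  have : N.1.FiniteIndex := N.2.2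
  let ρ : FreeGroup X →* Multiplicative (ZMod 2) ≀ᵣ (FreeGroup X ⧸ N.1) :=
    FreeGroup.lift fun y =>
      ⟨if y = x then Pi.mulSingle 1 (Multiplicative.ofAdd 1) else 1, FreeGroup.of y⟩
  have hρ : ∀ c, (ρ c).right = (c : FreeGroup X ⧸ N.1) :=
    DFunLike.congr_fun (FreeGroup.ext_hom (rightHom.comp ρ) (QuotientGroup.mk' N.1)
      fun y => by simp [ρ])
  have hρx :
      ρ (FreeGroup.of x) = ⟨Pi.mulSingle 1 (Multiplicative.ofAdd 1), FreeGroup.of x⟩ := by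
    simp [ρ]
  refine ⟨⟨ρ.ker, ρ.normal_ker, Subgroup.finiteIndex_ker ρ⟩, fun c hc => ?_, fun c hc => ?_⟩
  · rw [← QuotientGroup.eq_one_iff, ← hρ, MonoidHom.mem_ker.mp hc, one_right]
  · have hcomm := hρx ▸ hc.map (QuotientGroup.kerLift ρ)
    simpa [hρ] using right_mem_zpowers_of_commute (by decide) hcomm

end FreeGroup

theorem centralizer_of_generator_general (X : Type) (x : X) :
    Subgroup.centralizer {unit (FreeGroup X) (FreeGroup.of x)}
      = (Subgroup.zpowers (unit (FreeGroup X) (FreeGroup.of x))).topologicalClosure :=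
  centralizer_unit_eq_topologicalClosure_zpowers
    (FreeGroup.exists_finQuot_commute_imp_mem_zpowers x)

/-- Corollary 2.3 (first part): in the free profinite group `𝔉(X)` on a finite set
`X`, the centralizer of a free generator `x ∈ X` is the closure of the (pro)cyclic
subgroup `⟨x⟩`. -/
theorem centralizer_of_generator (X : Type) [Finite X] (x : X) :
    Subgroup.centralizer {unit (FreeGroup X) (FreeGroup.of x)}
      = (Subgroup.zpowers (unit (FreeGroup X) (FreeGroup.of x))).topologicalClosure :=
  centralizer_of_generator_general X x

end CSP
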